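/- arXiv:2402.12579 — 3 statements merged into one kernel-verified Lean document; each statement's English description precedes it below -/
import Mathlib

section
/- Let (x_K)_{K≥1} ⊆ {0,1}^ℤ be a good sequence: (x_K) is coordinatewise non-increasing with coordinatewise limit x_∞, and there is an increasing sequence (N_i) of positive integers such that for every K ∈ ℕ ∪ {∞}, x_K is quasi-generic along (N_i) for a measure ν_K, and ν_K(1) → ν_∞(1) as K → ∞. Then ν_K → ν_∞ in the weak-* topology. -/
open MeasureTheory Filter Topology

/-- The full shift space `{0,1}^ℤ`, with `Bool` playing the role of `{0,1}`
(`false` ↔ `0`, `true` ↔ `1`). -/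
abbrev BinSeq : Type := ℤ → Bool

/-- The left shift `σ`. -/
def shift : BinSeq → BinSeq := fun x n => x (n + 1)

/-- The product shift `σ × σ`. -/
def shift2 : BinSeq × BinSeq → BinSeq × BinSeq := Prod.map shift shift

/-- The product shift `σ × σ × σ` on triples `((w,x),y)`. -/
def shift3 : (BinSeq × BinSeq) × BinSeq → (BinSeq × BinSeq) × BinSeq := Prod.map shift2 shift

/-- Coordinatewise multiplication `M(x,y)` of two 0-1 sequences. -/
def Mmul : BinSeq × BinSeq → BinSeq := fun p n => p.1 n && p.2 n

/-- The map `N((w,x),y) = (1-y)·w + y·x` (coordinatewise: `x` where `y = 1`, `w` where `y = 0`). -/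
def Nmap : (BinSeq × BinSeq) × BinSeq → BinSeq := fun t n => bif t.2 n then t.1.2 n else t.1.1 n

/-- The coordinatewise partial order `y ≤ x` on `{0,1}^ℤ`. -/
def leSeq (y x : BinSeq) : Prop := ∀ n, y n ≤ x n

/-- A subshift: a closed, shift-invariant subset of `{0,1}^ℤ`. -/
def IsSubshift (X : Set BinSeq) : Prop := IsClosed X ∧ shift ⁻¹' X = X

/-- The set of `T`-invariant Borel probability measures. -/
def InvProb {α : Type*} [MeasurableSpace α] (T : α → α) : Set (Measure α) :=
  {μ | IsProbabilityMeasure μ ∧ Measure.map T μ = μ}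

/-- `𝓜(X)`: shift-invariant Borel probability measures concentrated on `X`. -/
def MeasOn (X : Set BinSeq) : Set (Measure BinSeq) :=
  {μ | μ ∈ InvProb shift ∧ μ X = 1}

/-- `𝓜(Z)` for `Z ⊆ {0,1}^ℤ × {0,1}^ℤ`. -/
def MeasOn2 (Z : Set (BinSeq × BinSeq)) : Set (Measure (BinSeq × BinSeq)) :=
  {ρ | ρ ∈ InvProb shift2 ∧ ρ Z = 1}

/-- `X` is a measure-theoretically subordinate subshift with base measure `ν`:
`𝓜(X) = {M_*(ρ) : ρ ∈ 𝓜({0,1}^ℤ × {0,1}^ℤ, σ×σ), (π₁)_*(ρ) = ν}`. -/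
def Subord (X : Set BinSeq) (ν : Measure BinSeq) : Prop :=
  MeasOn X = {μ | ∃ ρ ∈ InvProb shift2,
    Measure.map Prod.fst ρ = ν ∧ Measure.map Mmul ρ = μ}

/-- `X` is a sandwich measure-theoretically subordinate subshift with pre-base measure `ρ`:
`𝓜(X) = {N_*(κ) : κ ∈ 𝓜(({0,1}^ℤ)³), (π₁,₂)_*(κ) = ρ}`. -/
def SandwichSubord (X : Set BinSeq) (ρ : Measure (BinSeq × BinSeq)) : Prop :=
  MeasOn X = {μ | ∃ κ ∈ InvProb shift3,
    Measure.map Prod.fst κ = ρ ∧ Measure.map Nmap κ = μ}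

/-- `ρ({(w,x) : w ≤ x coordinatewise}) = 1`: a pre-base measure satisfying this is a base
measure. -/
def AboveDiag (ρ : Measure (BinSeq × BinSeq)) : Prop :=
  ρ {p : BinSeq × BinSeq | ∀ n, p.1 n ≤ p.2 n} = 1

/-- The cylinder `{x : x₀ = b}`. -/
def cylB (b : Bool) : Set BinSeq := {x : BinSeq | x 0 = b}

/-- The set `[w,x] = {σ^k y : w ≤ y ≤ x, k ∈ ℤ}`. -/
def sandwichSet (w x : BinSeq) : Set BinSeq :=
  {z | ∃ (k : ℤ) (y : BinSeq), (∀ n, w n ≤ y n) ∧ (∀ n, y n ≤ x n) ∧ z = fun n => y (n + k)}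

/-- Topological entropy (base-2) of a subshift: exponential growth rate of the number of
`n`-blocks appearing in `X`. -/
noncomputable def htop (X : Set BinSeq) : ℝ :=
  Filter.limsup (fun n : ℕ =>
    Real.logb 2
      ((Set.ncard {A : Fin n → Bool | ∃ x ∈ X, ∀ i : Fin n, x ((i : ℕ) : ℤ) = A i} : ℝ))
      / (n : ℝ)) Filter.atTop

/-- Kolmogorov–Sinai entropy (base-2) of a shift-invariant measure on `{0,1}^ℤ`,
computed via the generating partition into cylinders. -/
noncomputable def entropy (μ : Measure BinSeq) : ℝ :=
  Filter.limsup (fun n : ℕ =>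
    (∑ A : Fin n → Bool,
      Real.negMulLog ((μ {x : BinSeq | ∀ i : Fin n, x ((i : ℕ) : ℤ) = A i}).toReal))
      / ((n : ℝ) * Real.log 2)) Filter.atTop

/-- Kolmogorov–Sinai entropy (base-2) of a `σ×σ`-invariant measure on
`{0,1}^ℤ × {0,1}^ℤ`. -/
noncomputable def entropy2 (ρ : Measure (BinSeq × BinSeq)) : ℝ :=
  Filter.limsup (fun n : ℕ =>
    (∑ A : Fin n → Bool, ∑ B : Fin n → Bool,
      Real.negMulLog ((ρ {p : BinSeq × BinSeq |
        (∀ i : Fin n, p.1 ((i : ℕ) : ℤ) = A i) ∧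
        (∀ i : Fin n, p.2 ((i : ℕ) : ℤ) = B i)}).toReal))
      / ((n : ℝ) * Real.log 2)) Filter.atTop

open scoped Classical in
/-- Topological pressure (base-2) of a subshift `X` with potential `φ`:
`𝒫_{X,φ} = lim (1/n) log₂ Σ_{A ∈ ℒ_n(X)} 2^{sup_{x ∈ [A] ∩ X} φ⁽ⁿ⁾(x)}`. -/
noncomputable def pressure (X : Set BinSeq) (φ : BinSeq → ℝ) : ℝ :=
  Filter.limsup (fun n : ℕ =>
    Real.logb 2 (∑ A : Fin n → Bool,
      if ∃ x ∈ X, ∀ i : Fin n, x ((i : ℕ) : ℤ) = A i then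
        (2 : ℝ) ^ sSup {r : ℝ | ∃ x ∈ X, (∀ i : Fin n, x ((i : ℕ) : ℤ) = A i) ∧
          r = ∑ k ∈ Finset.range n, φ (shift^[k] x)}
      else 0) / (n : ℝ)) Filter.atTop

/-- Birkhoff average of a continuous function along the first `N` points of the `T`-orbit. -/
noncomputable def birkAvg {α : Type*} [TopologicalSpace α] (T : α → α) (x : α) (N : ℕ)
    (f : C(α, ℝ)) : ℝ :=
  (∑ n ∈ Finset.range N, f (T^[n] x)) / (N : ℝ)

/-- `x` is quasi-generic for `μ` along `(N i)`: the empirical measures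
`(1/N_i) Σ_{n<N_i} δ_{T^n x}` converge weakly-* to `μ`. -/
def QuasiGenericAlong {α : Type*} [TopologicalSpace α] [MeasurableSpace α]
    (T : α → α) (x : α) (N : ℕ → ℕ) (μ : Measure α) : Prop :=
  ∀ f : C(α, ℝ), Filter.Tendsto (fun i => birkAvg T x (N i) f) Filter.atTop
    (nhds (∫ y, f y ∂μ))

/-- `x` is generic for `μ`. -/
def GenericFor {α : Type*} [TopologicalSpace α] [MeasurableSpace α]
    (T : α → α) (x : α) (μ : Measure α) : Prop :=
  QuasiGenericAlong T x (fun i => i) μ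

/-- Weak-* convergence of a sequence of measures. -/
def WeakTendsto {α : Type*} [TopologicalSpace α] [MeasurableSpace α]
    (μs : ℕ → Measure α) (μ : Measure α) : Prop :=
  ∀ f : C(α, ℝ), Filter.Tendsto (fun K => ∫ y, f y ∂(μs K)) Filter.atTop
    (nhds (∫ y, f y ∂μ))

/-- `V(y)`: the invariant measures for which `y` is quasi-generic (along some
increasing sequence). -/
def Vset (y : BinSeq) : Set (Measure BinSeq) :=
  {μ | μ ∈ InvProb shift ∧ ∃ N : ℕ → ℕ, StrictMono N ∧ QuasiGenericAlong shift y N μ}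

/-- `V_{(N_i)}(y)`: the invariant measures for which `y` is quasi-generic along a
subsequence of `(N_i)`. -/
def VsetAlong (N : ℕ → ℕ) (y : BinSeq) : Set (Measure BinSeq) :=
  {μ | μ ∈ InvProb shift ∧ ∃ φ : ℕ → ℕ, StrictMono φ ∧ QuasiGenericAlong shift y (N ∘ φ) μ}

/-- `β` is the Bernoulli product measure on `{0,1}^ℤ` with `β({x : x₀ = 0}) = p`. -/
def IsBernoulli (p : ENNReal) (β : Measure BinSeq) : Prop :=
  IsProbabilityMeasure β ∧ ∀ (s : Finset ℤ) (A : ℤ → Bool),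
    β {x : BinSeq | ∀ i ∈ s, x i = A i} = ∏ i ∈ s, (if A i = false then p else 1 - p)

/-!
As `x_∞ ≤ x_K` coordinatewise, the points `σⁿ x_K` and `σⁿ x_∞` either agree on a window
`[-m, m]`, on which a continuous `f` depends up to `ε`, or `σⁿ x_K` has strictly more ones
there. So `|f(σⁿ x_K) - f(σⁿ x_∞)| ≤ ε + 2‖f‖ (W(σⁿ x_K) - W(σⁿ x_∞))`, where `W` counts the
ones in the window. Averaging along `(N_i)` and using shift invariance,
`|ν_K(f) - ν_∞(f)| ≤ ε + 2‖f‖ (2m+1) (ν_K(1) - ν_∞(1))`, whose right side tends to `ε`.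
-/

lemma shift_iterate_apply (s : ℕ) (x : BinSeq) (i : ℤ) : shift^[s] x i = x (i + s) := by
  induction s generalizing x with
  | zero => simp
  | succ s ih =>
    rw [Function.iterate_succ_apply, ih, shift, Nat.cast_succ, add_assoc]

lemma leSeq.shift_iterate {y x : BinSeq} (h : leSeq y x) (s : ℕ) :
    leSeq (shift^[s] y) (shift^[s] x) := fun i => by
  simp only [shift_iterate_apply]
  exact h _

lemma uniformity_binSeq :
    uniformity BinSeq = ⨅ i : ℤ, 𝓟 {p : BinSeq × BinSeq | p.1 i = p.2 i} := by
  simp only [Pi.uniformity, DiscreteUniformity.eq_principal_setRelId, comap_principal]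
  rfl

lemma ContinuousMap.exists_abs_sub_lt_of_eqOn_window (f : C(BinSeq, ℝ)) {ε : ℝ} (hε : 0 < ε) :
    ∃ m : ℕ, ∀ y z : BinSeq, (∀ i : ℤ, |i| ≤ m → y i = z i) → |f y - f z| < ε := by
  have hU : {p : BinSeq × BinSeq | dist (f p.1) (f p.2) < ε} ∈ uniformity BinSeq :=
    CompactSpace.uniformContinuous_of_continuous f.continuous (Metric.dist_mem_uniformity hε)
  rw [uniformity_binSeq, (hasBasis_iInf_principal_finite _).mem_iff] at hU
  obtain ⟨t, ht, hsub⟩ := hU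
  obtain ⟨m, hm⟩ := (ht.image Int.natAbs).bddAbove
  refine ⟨m, fun y z hyz => ?_⟩
  have hwindow : (y, z) ∈ ⋂ i ∈ t, {p : BinSeq × BinSeq | p.1 i = p.2 i} :=
    Set.mem_iInter₂.2 fun i hi => hyz i <| by
      rw [Int.abs_eq_natAbs]
      exact_mod_cast hm ⟨i, hi, rfl⟩
  simpa [Real.dist_eq] using hsub hwindow

noncomputable def coordIndicator (t : ℤ) : C(BinSeq, ℝ) :=
  ⟨fun z => if z t then 1 else 0,
    (continuous_of_discreteTopology (f := fun b : Bool => if b then (1 : ℝ) else 0)).comp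
      (continuous_apply t)⟩

noncomputable def windowCount (m : ℕ) : C(BinSeq, ℝ) :=
  ∑ t ∈ Finset.Icc (-(m : ℤ)) m, coordIndicator t

lemma integral_coordIndicator_zero (ν : Measure BinSeq) :
    ∫ z, coordIndicator 0 z ∂ν = (ν (cylB true)).toReal := by
  have hmeas : MeasurableSet (cylB true) :=
    (measurableSet_singleton true).preimage (measurable_pi_apply 0)
  rw [← measureReal_def, ← integral_indicator_one hmeas]
  congr 1 with z
  by_cases h : z 0 <;> simp [coordIndicator, cylB, h]

lemma integral_coordIndicator_add_one {ν : Measure BinSeq} (hν : Measure.map shift ν = ν)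
    (t : ℤ) : ∫ z, coordIndicator (t + 1) z ∂ν = ∫ z, coordIndicator t z ∂ν := by
  have hshift : Measurable shift := (continuous_pi fun n => continuous_apply (n + 1)).measurable
  conv_rhs => rw [← hν]
  rw [integral_map hshift.aemeasurable (coordIndicator t).continuous.aestronglyMeasurable]
  congr with z

lemma integral_coordIndicator {ν : Measure BinSeq} (hν : Measure.map shift ν = ν) (t : ℤ) :
    ∫ z, coordIndicator t z ∂ν = (ν (cylB true)).toReal := by
  induction t using Int.induction_on with
  | zero => exact integral_coordIndicator_zero ν
  | succ t ih => rw [integral_coordIndicator_add_one hν, ih]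
  | pred t ih => rw [← integral_coordIndicator_add_one hν, sub_add_cancel, ih]

lemma integral_windowCount {ν : Measure BinSeq} (hν : ν ∈ InvProb shift) (m : ℕ) :
    ∫ z, windowCount m z ∂ν = (Finset.Icc (-(m : ℤ)) m).card * (ν (cylB true)).toReal := by
  have := hν.1
  simp only [windowCount, ContinuousMap.coe_sum, Finset.sum_apply]
  rw [integral_finsetSum _ fun t _ => (coordIndicator t).continuous.integrable_of_hasCompactSupport
    (.of_compactSpace _)]
  simp [integral_coordIndicator hν.2]

lemma abs_sub_le_windowCount_sub (f : C(BinSeq, ℝ)) {m : ℕ} {ε : ℝ}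
    (hf : ∀ y z : BinSeq, (∀ i : ℤ, |i| ≤ m → y i = z i) → |f y - f z| < ε)
    {y z : BinSeq} (hzy : leSeq z y) :
    |f y - f z| ≤ ε + 2 * ‖f‖ * (windowCount m y - windowCount m z) := by
  have hcoord : ∀ t, coordIndicator t y - coordIndicator t z = if y t = z t then 0 else 1 := by
    intro t
    have := hzy t
    simp only [coordIndicator, ContinuousMap.coe_mk]
    revert this
    cases y t <;> cases z t <;> simp +decide
  have hcount : windowCount m y - windowCount m z =
      ∑ t ∈ Finset.Icc (-(m : ℤ)) m, if y t = z t then 0 else 1 := by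
    simp only [windowCount, ContinuousMap.coe_sum, Finset.sum_apply, ← Finset.sum_sub_distrib,
      hcoord]
  have hcount_nonneg : 0 ≤ windowCount m y - windowCount m z := by
    rw [hcount]
    exact Finset.sum_nonneg fun t _ => by split_ifs <;> norm_num
  by_cases hagree : ∀ i : ℤ, |i| ≤ m → y i = z i
  · have := hf y z hagree
    have : 0 ≤ 2 * ‖f‖ * (windowCount m y - windowCount m z) := by positivity
    linarith
  · push Not at hagree
    obtain ⟨t, ht, hne⟩ := hagree
    have hcount_ge : 1 ≤ windowCount m y - windowCount m z := by
      have := Finset.single_le_sum (f := fun s => if y s = z s then (0 : ℝ) else 1)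
        (fun s _ => by split_ifs <;> norm_num) (Finset.mem_Icc.2 (abs_le.1 ht))
      rwa [if_neg hne, ← hcount] at this
    have hf_osc : |f y - f z| ≤ 2 * ‖f‖ := by
      calc |f y - f z| ≤ |f y| + |f z| := abs_sub _ _
        _ ≤ ‖f‖ + ‖f‖ := add_le_add (f.norm_coe_le_norm y) (f.norm_coe_le_norm z)
        _ = 2 * ‖f‖ := by ring
    have hε : 0 < ε := by simpa using hf y y fun _ _ => rfl
    nlinarith [norm_nonneg f]

section Averages

variable {α : Type*} [TopologicalSpace α] {T : α → α} {x y : α} {f h : C(α, ℝ)} {ε C : ℝ}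

lemma abs_birkAvg_sub_le (hε : 0 ≤ ε)
    (hdom : ∀ n, |f (T^[n] x) - f (T^[n] y)| ≤ ε + C * (h (T^[n] x) - h (T^[n] y))) (N : ℕ) :
    |birkAvg T x N f - birkAvg T y N f| ≤ ε + C * (birkAvg T x N h - birkAvg T y N h) := by
  rcases N.eq_zero_or_pos with rfl | hN
  · simpa [birkAvg] using hε
  have hN' : (0 : ℝ) < N := Nat.cast_pos.2 hN
  simp only [birkAvg, ← sub_div, ← Finset.sum_sub_distrib, abs_div, abs_of_pos hN']
  rw [div_le_iff₀ hN', add_mul, mul_assoc, div_mul_cancel₀ _ hN'.ne']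
  calc |∑ n ∈ Finset.range N, (f (T^[n] x) - f (T^[n] y))|
      ≤ ∑ n ∈ Finset.range N, |f (T^[n] x) - f (T^[n] y)| := Finset.abs_sum_le_sum_abs _ _
    _ ≤ ∑ n ∈ Finset.range N, (ε + C * (h (T^[n] x) - h (T^[n] y))) :=
      Finset.sum_le_sum fun n _ => hdom n
    _ = ε * N + C * ∑ n ∈ Finset.range N, (h (T^[n] x) - h (T^[n] y)) := by
      rw [Finset.sum_add_distrib, Finset.sum_const, Finset.card_range, nsmul_eq_mul, mul_comm,
        Finset.mul_sum]

variable [MeasurableSpace α] {N : ℕ → ℕ} {μ ν : Measure α}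

lemma abs_integral_sub_le_of_quasiGenericAlong (hx : QuasiGenericAlong T x N μ)
    (hy : QuasiGenericAlong T y N ν) (hε : 0 ≤ ε)
    (hdom : ∀ n, |f (T^[n] x) - f (T^[n] y)| ≤ ε + C * (h (T^[n] x) - h (T^[n] y))) :
    |∫ z, f z ∂μ - ∫ z, f z ∂ν| ≤ ε + C * (∫ z, h z ∂μ - ∫ z, h z ∂ν) :=
  le_of_tendsto_of_tendsto' ((hx f).sub (hy f)).abs
    (tendsto_const_nhds.add (((hx h).sub (hy h)).const_mul C))
    fun i => abs_birkAvg_sub_le hε hdom (N i)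

end Averages

theorem stmt4_general (x : ℕ → BinSeq) (xinf : BinSeq) (N : ℕ → ℕ)
    (ν : ℕ → Measure BinSeq) (νinf : Measure BinSeq)
    (hmono : ∀ n : ℤ, Antitone (fun K => x K n))
    (hlim : ∀ n : ℤ, ∃ K0, ∀ K ≥ K0, x K n = xinf n)
    (hP : ∀ K, ν K ∈ InvProb shift) (hPinf : νinf ∈ InvProb shift)
    (hqg : ∀ K, QuasiGenericAlong shift (x K) N (ν K))
    (hqginf : QuasiGenericAlong shift xinf N νinf)
    (hdens : Filter.Tendsto (fun K => ((ν K) (cylB true)).toReal) Filter.atTop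
      (nhds ((νinf (cylB true)).toReal))) :
    WeakTendsto ν νinf := by
  have hle : ∀ K, leSeq xinf (x K) := fun K n => by
    obtain ⟨K0, hK0⟩ := hlim n
    rw [← hK0 (max K K0) (le_max_right _ _)]
    exact hmono n (le_max_left _ _)
  intro f
  refine Metric.tendsto_nhds.2 fun ε hε => ?_
  obtain ⟨m, hm⟩ := f.exists_abs_sub_lt_of_eqOn_window (half_pos hε)
  set c : ℝ := ((Finset.Icc (-(m : ℤ)) m).card : ℝ)
  have hbound : ∀ K, |∫ z, f z ∂ν K - ∫ z, f z ∂νinf| ≤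
      ε / 2 + 2 * ‖f‖ * (c * (ν K (cylB true)).toReal - c * (νinf (cylB true)).toReal) := by
    intro K
    rw [← integral_windowCount (hP K), ← integral_windowCount hPinf]
    exact abs_integral_sub_le_of_quasiGenericAlong (hqg K) hqginf (half_pos hε).le
      fun n => abs_sub_le_windowCount_sub f hm ((hle K).shift_iterate n)
  have hbound_lim : Tendsto (fun K => ε / 2 + 2 * ‖f‖ *
      (c * (ν K (cylB true)).toReal - c * (νinf (cylB true)).toReal)) atTop (𝓝 (ε / 2)) := by
    simpa using (tendsto_const_nhds (x := ε / 2)).add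
      (((hdens.const_mul c).sub_const (c * (νinf (cylB true)).toReal)).const_mul (2 * ‖f‖))
  filter_upwards [hbound_lim.eventually (gt_mem_nhds (half_lt_self hε))] with K hK
  exact (Real.dist_eq _ _ ▸ hbound K).trans_lt hK

/-- If `(x_K)` is a good sequence (coordinatewise non-increasing with limit
`x_∞`, all quasi-generic along a common sequence `(N_i)` for measures `ν_K`, and
`ν_K(1) → ν_∞(1)`), then `ν_K → ν_∞` in the weak-* topology. -/
theorem stmt4 (x : ℕ → BinSeq) (xinf : BinSeq) (N : ℕ → ℕ)
    (ν : ℕ → Measure BinSeq) (νinf : Measure BinSeq)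
    (hmono : ∀ n : ℤ, Antitone (fun K => x K n))
    (hlim : ∀ n : ℤ, ∃ K0, ∀ K ≥ K0, x K n = xinf n)
    (hN : StrictMono N)
    (hP : ∀ K, ν K ∈ InvProb shift) (hPinf : νinf ∈ InvProb shift)
    (hqg : ∀ K, QuasiGenericAlong shift (x K) N (ν K))
    (hqginf : QuasiGenericAlong shift xinf N νinf)
    (hdens : Filter.Tendsto (fun K => ((ν K) (cylB true)).toReal) Filter.atTop
      (nhds ((νinf (cylB true)).toReal))) :
    WeakTendsto ν νinf :=
  stmt4_general x xinf N ν νinf hmono hlim hP hPinf hqg hqginf hdens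
end

section
/- Let (x_K)_{K≥1} ⊆ {0,1}^ℤ be a good sequence with coordinatewise limit x and associated sequence (N_i) and measures ν_K (K ∈ ℕ ∪ {∞}). Suppose that for each K the subshift [𝟎, x_K]‾ (the closure of {σ^n y : y ≤ x_K, n ∈ ℤ}) is measure-theoretically subordinate with base measure ν_K. Then both ⋂_{K≥1} [𝟎, x_K]‾ and [𝟎, x]‾ are measure-theoretically subordinate subshifts with base measure ν_∞ = lim_K ν_K. -/
open MeasureTheory Filter Topology

/-!
If `z ≤ y` coordinatewise, a cylinder over a finite window `s` can distinguish `y` from `z` only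
at a coordinate where `y` is `1` and `z` is `0`. Averaging this along the orbits of `x_K ≥ x` and
using shift invariance gives `|ν_K(D) - ν_∞(D)| ≤ |s| (ν_K(1) - ν_∞(1))`, so `ν_K → ν_∞` on
cylinders.

Every `μ ∈ 𝓜(⋂_K [𝟎, x_K]‾)` is `M_*ρ_K` for a coupling `ρ_K` with first marginal `ν_K`. A weak-*
limit point of `(ρ_K)` exists by compactness; it is `σ × σ`-invariant, still has `M`-image `μ`,
and its first marginal agrees with `ν_∞` on cylinders. Conversely, if `ρ` has first marginal
`ν_∞`, then `M_*ρ` lives on `[𝟎, x]‾`: so does `ν_∞`, since `x` is quasi-generic for it, and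
`[𝟎, x]‾` is downward closed with `M(w, v) ≤ w`. As `[𝟎, x]‾ ⊆ ⋂_K [𝟎, x_K]‾`, the chain
`{M_*ρ} ⊆ 𝓜([𝟎, x]‾) ⊆ 𝓜(⋂_K [𝟎, x_K]‾) ⊆ {M_*ρ}` closes.
-/

section QuasiGeneric

variable {X : Type*} [TopologicalSpace X] [MeasurableSpace X] {T : X → X} {N : ℕ → ℕ}

theorem QuasiGenericAlong.abs_integral_sub_le {a b : X} {μ μ' : Measure X}
    (ha : QuasiGenericAlong T a N μ) (hb : QuasiGenericAlong T b N μ') {ι : Type*}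
    (s : Finset ι) (f : C(X, ℝ)) (g : ι → C(X, ℝ))
    (hfg : ∀ n, |f (T^[n] a) - f (T^[n] b)| ≤ ∑ i ∈ s, (g i (T^[n] a) - g i (T^[n] b))) :
    |∫ y, f y ∂μ - ∫ y, f y ∂μ'| ≤ ∑ i ∈ s, (∫ y, g i y ∂μ - ∫ y, g i y ∂μ') := by
  have hfin : ∀ M, |birkAvg T a M f - birkAvg T b M f| ≤
      ∑ i ∈ s, (birkAvg T a M (g i) - birkAvg T b M (g i)) := by
    intro M
    simp only [birkAvg, ← sub_div, ← Finset.sum_sub_distrib, ← Finset.sum_div, abs_div,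
      Nat.abs_cast]
    gcongr
    rw [Finset.sum_comm]
    exact (Finset.abs_sum_le_sum_abs _ _).trans (Finset.sum_le_sum fun n _ => hfg n)
  exact le_of_tendsto_of_tendsto' ((ha f).sub (hb f)).abs
    (tendsto_finsetSum _ fun i _ => (ha (g i)).sub (hb (g i))) fun j => hfin (N j)

theorem QuasiGenericAlong.measure_eq_one [NormalSpace X] [OpensMeasurableSpace X] {x : X}
    {μ : Measure X} [IsProbabilityMeasure μ] [μ.WeaklyRegular]
    (h : QuasiGenericAlong T x N μ) {F : Set X} (hF : IsClosed F) (hxF : ∀ n, T^[n] x ∈ F) :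
    μ F = 1 := by
  rw [← prob_compl_eq_zero_iff hF.measurableSet]
  by_contra hpos
  obtain ⟨K, hKF, hK, hKpos⟩ := hF.isOpen_compl.exists_lt_isClosed (pos_iff_ne_zero.2 hpos)
  obtain ⟨f, hf0, hf1, hf01⟩ :=
    exists_continuous_zero_one_of_isClosed hF hK (disjoint_compl_right.mono_right hKF)
  have hint : ∫ y, f y ∂μ = 0 := by
    refine tendsto_nhds_unique (h f) ?_
    simp [birkAvg, fun n => hf0 (hxF n)]
  have hKf : μ.real K ≤ ∫ y, f y ∂μ := by
    rw [← integral_indicator_one hK.measurableSet]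
    refine integral_mono ((integrable_const 1).indicator hK.measurableSet)
      (Integrable.of_bound f.continuous.aestronglyMeasurable 1 (ae_of_all _ fun y => ?_))
      fun y => ?_
    · rw [Real.norm_of_nonneg (hf01 y).1]
      exact (hf01 y).2
    · by_cases hy : y ∈ K
      · simp [hy, hf1 hy]
      · simp [hy, (hf01 y).1]
  have hKreal : 0 < μ.real K := ENNReal.toReal_pos hKpos.ne' (measure_ne_top μ K)
  linarith

end QuasiGeneric

namespace MeasureTheory.ProbabilityMeasure

variable {Ω Ω' : Type*} [MeasurableSpace Ω] [TopologicalSpace Ω] [OpensMeasurableSpace Ω]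
  {P : ℕ → ProbabilityMeasure Ω} {P₀ : ProbabilityMeasure Ω}

theorem map_eq_of_tendsto [MeasurableSpace Ω'] [TopologicalSpace Ω'] [BorelSpace Ω']
    [HasOuterApproxClosed Ω'] {f : Ω → Ω'} (hf : Continuous f)
    {Q : ℕ → ProbabilityMeasure Ω'} {Q₀ : ProbabilityMeasure Ω'}
    (hP : Tendsto P atTop (𝓝 P₀)) (hQ : Tendsto Q atTop (𝓝 Q₀))
    (h : ∀ j, Measure.map f (P j) = Q j) : Measure.map f P₀ = Q₀ := by
  have hmap := ((continuous_map hf).tendsto P₀).comp hP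
  have hPQ : (fun j => (P j).map hf.measurable.aemeasurable) = Q :=
    funext fun j => Subtype.ext ((toMeasure_map _ _).trans (h j))
  rw [Function.comp_def, hPQ] at hmap
  rw [← toMeasure_map _ hf.measurable.aemeasurable, tendsto_nhds_unique hmap hQ]

theorem tendsto_measureReal_of_isClopen [HasOuterApproxClosed Ω] (hP : Tendsto P atTop (𝓝 P₀))
    {E : Set Ω} (hE : IsClopen E) :
    Tendsto (fun j => (P j : Measure Ω).real E) atTop (𝓝 ((P₀ : Measure Ω).real E)) :=
  (ENNReal.tendsto_toReal (measure_ne_top _ E)).comp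
    (tendsto_measure_of_null_frontier_of_tendsto' hP (by simp [hE.frontier_eq]))

end MeasureTheory.ProbabilityMeasure

theorem MeasureTheory.Measure.ext_of_measurableCylinders {ι : Type*} {α : ι → Type*}
    [∀ i, MeasurableSpace (α i)] {μ ν : Measure (∀ i, α i)} [IsFiniteMeasure μ]
    [IsFiniteMeasure ν] (h : ∀ s ∈ measurableCylinders α, μ.real s = ν.real s) : μ = ν := by
  have h' : ∀ s ∈ measurableCylinders α, μ s = ν s := fun s hs =>
    (ENNReal.toReal_eq_toReal_iff' (measure_ne_top _ _) (measure_ne_top _ _)).mp (h s hs)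
  exact ext_of_generate_finite _ generateFrom_measurableCylinders.symm
    isPiSystem_measurableCylinders h' (h' _ (univ_mem_measurableCylinders α))

theorem continuous_shift : Continuous shift :=
  continuous_pi fun n => continuous_apply (n + 1)

theorem continuous_shift2 : Continuous shift2 :=
  continuous_shift.prodMap continuous_shift

theorem continuous_Mmul : Continuous Mmul :=
  continuous_pi fun n =>
    (continuous_of_discreteTopology (f := fun q : Bool × Bool => q.1 && q.2)).comp
      (f := fun p : BinSeq × BinSeq => (p.1 n, p.2 n)) (by fun_prop)

theorem shift_comp_Mmul : shift ∘ Mmul = Mmul ∘ shift2 := rfl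

theorem shift_iterate_apply_s5 (y : BinSeq) (n : ℕ) (p : ℤ) : shift^[n] y p = y (p + n) := by
  induction n generalizing p with
  | zero => simp
  | succ n ih =>
    rw [Function.iterate_succ_apply', shift, ih]
    push_cast
    ring_nf

theorem isClopen_cylinder (s : Finset ℤ) (S : Set (s → Bool)) :
    IsClopen (cylinder s S : Set BinSeq) :=
  (isClopen_discrete S).preimage (continuous_pi fun i => continuous_apply (i : ℤ))

theorem isClopen_apply_eq_true (i : ℤ) : IsClopen {y : BinSeq | y i = true} :=
  (isClopen_discrete {true}).preimage (continuous_apply i)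

theorem measure_setOf_apply_eq_true {ν : Measure BinSeq} (hν : ν ∈ InvProb shift) (i : ℤ) :
    ν {y : BinSeq | y i = true} = ν (cylB true) := by
  have hstep : ∀ j : ℤ, ν {y : BinSeq | y (j + 1) = true} = ν {y : BinSeq | y j = true} :=
    fun j => by
      conv_rhs => rw [← hν.2]
      exact (Measure.map_apply continuous_shift.measurable
        (isClopen_apply_eq_true j).isOpen.measurableSet).symm
  induction i using Int.induction_on with
  | zero => rfl
  | succ j ih => rw [hstep, ih]
  | pred j ih => rw [← ih, ← hstep, sub_add_cancel]

theorem abs_indicator_cylinder_sub_le {y z : BinSeq} (hzy : ∀ n, z n ≤ y n) (s : Finset ℤ)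
    (S : Set (s → Bool)) :
    |(cylinder s S).indicator (1 : BinSeq → ℝ) y - (cylinder s S).indicator 1 z| ≤
      ∑ i ∈ s, ({w : BinSeq | w i = true}.indicator (1 : BinSeq → ℝ) y -
        {w : BinSeq | w i = true}.indicator 1 z) := by
  classical
  have hterm : ∀ i, 0 ≤ {w : BinSeq | w i = true}.indicator (1 : BinSeq → ℝ) y -
      {w : BinSeq | w i = true}.indicator 1 z := by
    intro i
    have := hzy i
    cases hy : y i <;> cases hz : z i <;> simp_all [Set.indicator, Bool.le_iff_imp]
  by_cases h : ∀ i ∈ s, y i = z i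
  · have hyz : s.restrict y = s.restrict z := funext fun i => h i i.2
    have hmem : y ∈ cylinder s S ↔ z ∈ cylinder s S := by simp only [mem_cylinder, hyz]
    have heq : (cylinder s S).indicator (1 : BinSeq → ℝ) y = (cylinder s S).indicator 1 z := by
      simp [Set.indicator_apply, hmem]
    rw [heq, sub_self, abs_zero]
    exact Finset.sum_nonneg fun i _ => hterm i
  · simp only [not_forall] at h
    obtain ⟨i, hi, hne⟩ := h
    have hyi : y i = true ∧ z i = false := by
      have := hzy i
      revert this hne
      cases y i <;> cases z i <;> decide
    calc |(cylinder s S).indicator (1 : BinSeq → ℝ) y - (cylinder s S).indicator 1 z|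
        ≤ 1 := by
          by_cases hy : y ∈ cylinder s S <;> by_cases hz : z ∈ cylinder s S <;> simp [hy, hz]
      _ = {w : BinSeq | w i = true}.indicator (1 : BinSeq → ℝ) y -
          {w : BinSeq | w i = true}.indicator 1 z := by simp [hyi]
      _ ≤ _ := Finset.single_le_sum (fun j _ => hterm j) hi

theorem abs_measureReal_cylinder_sub_le {y z : BinSeq} (hzy : ∀ n, z n ≤ y n) {N : ℕ → ℕ}
    {ν ν' : Measure BinSeq} (hν : ν ∈ InvProb shift) (hν' : ν' ∈ InvProb shift)
    (hy : QuasiGenericAlong shift y N ν) (hz : QuasiGenericAlong shift z N ν')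
    (s : Finset ℤ) (S : Set (s → Bool)) :
    |ν.real (cylinder s S) - ν'.real (cylinder s S)| ≤
      s.card * (ν.real (cylB true) - ν'.real (cylB true)) := by
  have key := hy.abs_integral_sub_le hz s
    (BoundedContinuousFunction.indicator _ (isClopen_cylinder s S)).toContinuousMap
    (fun i => (BoundedContinuousFunction.indicator _ (isClopen_apply_eq_true i)).toContinuousMap)
    fun n => abs_indicator_cylinder_sub_le
      (fun p => by simpa only [shift_iterate_apply_s5] using hzy (p + n)) s S
  simp only [BoundedContinuousFunction.coe_toContinuousMap,
    BoundedContinuousFunction.indicator_apply] at key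
  have hE : ∀ i, MeasurableSet {y : BinSeq | y i = true} :=
    fun i => (isClopen_apply_eq_true i).isOpen.measurableSet
  simp only [integral_indicator_one (isClopen_cylinder s S).isOpen.measurableSet,
    integral_indicator_one (hE _), measureReal_def, measure_setOf_apply_eq_true hν,
    measure_setOf_apply_eq_true hν', Finset.sum_const, nsmul_eq_mul] at key
  simpa only [measureReal_def] using key

theorem tendsto_measureReal_of_mem_measurableCylinders {x : ℕ → BinSeq} {xinf : BinSeq}
    (hle : ∀ K n, xinf n ≤ x K n) {N : ℕ → ℕ} {ν : ℕ → Measure BinSeq} {νinf : Measure BinSeq}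
    (hP : ∀ K, ν K ∈ InvProb shift) (hPinf : νinf ∈ InvProb shift)
    (hqg : ∀ K, QuasiGenericAlong shift (x K) N (ν K))
    (hqginf : QuasiGenericAlong shift xinf N νinf)
    (hdens : Tendsto (fun K => ((ν K) (cylB true)).toReal) atTop
      (𝓝 ((νinf (cylB true)).toReal)))
    {D : Set BinSeq} (hD : D ∈ measurableCylinders fun _ : ℤ => Bool) :
    Tendsto (fun K => (ν K).real D) atTop (𝓝 (νinf.real D)) := by
  obtain ⟨s, S, -, rfl⟩ := (mem_measurableCylinders D).1 hD
  have hbound : Tendsto (fun K => s.card * ((ν K).real (cylB true) - νinf.real (cylB true)))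
      atTop (𝓝 0) := by
    simpa only [measureReal_def, sub_self, mul_zero] using
      (hdens.sub_const ((νinf (cylB true)).toReal)).const_mul (s.card : ℝ)
  rw [← tendsto_sub_nhds_zero_iff]
  exact squeeze_zero_norm (fun K => abs_measureReal_cylinder_sub_le (hle K) (hP K) hPinf
    (hqg K) hqginf s S) hbound

theorem shift_iterate_mem_sandwichSet (x : BinSeq) (n : ℕ) :
    shift^[n] x ∈ sandwichSet (fun _ => false) x :=
  ⟨n, x, fun _ => Bool.false_le _, fun _ => le_rfl, funext (shift_iterate_apply_s5 x n)⟩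

theorem sandwichSet_mono {w x x' : BinSeq} (h : ∀ n, x n ≤ x' n) :
    sandwichSet w x ⊆ sandwichSet w x' := by
  rintro _ ⟨k, y, hwy, hyx, rfl⟩
  exact ⟨k, y, hwy, fun n => (hyx n).trans (h n), rfl⟩

/-- `z ↦ u ∧ z` is continuous, maps `[𝟎, x]` into itself, and sends `y` to `u`. -/
theorem mem_closure_sandwichSet_of_le {x y u : BinSeq}
    (hy : y ∈ closure (sandwichSet (fun _ => false) x)) (huy : ∀ n, u n ≤ y n) :
    u ∈ closure (sandwichSet (fun _ => false) x) := by
  have hcont : Continuous fun z : BinSeq => fun n => u n && z n :=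
    continuous_pi fun n =>
      (continuous_of_discreteTopology (f := fun b : Bool => u n && b)).comp (continuous_apply n)
  have hmaps : Set.MapsTo (fun z : BinSeq => fun n => u n && z n)
      (sandwichSet (fun _ => false) x) (sandwichSet (fun _ => false) x) := by
    rintro _ ⟨k, z, -, hzx, rfl⟩
    refine ⟨k, fun q => u (q - k) && z q, fun _ => Bool.false_le _,
      fun q => (Bool.and_le_right _ _).trans (hzx q), ?_⟩
    funext p
    simp only [add_sub_cancel_right]
  have hu : (fun n => u n && y n) = u := by
    funext n
    have := huy n
    cases hun : u n <;> cases hyn : y n <;> simp_all [Bool.le_iff_imp]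
  simpa only [hu] using map_mem_closure hcont hy hmaps

theorem measOn_mono {X X' : Set BinSeq} (h : X ⊆ X') : MeasOn X ⊆ MeasOn X' := by
  rintro μ ⟨hμ, hX⟩
  have := hμ.1
  exact ⟨hμ, le_antisymm prob_le_one (hX ▸ measure_mono h)⟩

theorem map_Mmul_mem_measOn {ρ : Measure (BinSeq × BinSeq)} (hρ : ρ ∈ InvProb shift2)
    {X : Set BinSeq} (hX : MeasurableSet X) (hdown : ∀ y ∈ X, ∀ u, (∀ n, u n ≤ y n) → u ∈ X)
    (hfst : ρ (Prod.fst ⁻¹' X) = 1) : Measure.map Mmul ρ ∈ MeasOn X := by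
  have := hρ.1
  have hM := continuous_Mmul.measurable
  refine ⟨⟨Measure.isProbabilityMeasure_map hM.aemeasurable, ?_⟩, ?_⟩
  · rw [Measure.map_map continuous_shift.measurable hM, shift_comp_Mmul,
      ← Measure.map_map hM continuous_shift2.measurable, hρ.2]
  · refine le_antisymm prob_le_one ?_
    rw [Measure.map_apply hM hX, ← hfst]
    exact measure_mono fun p hp => hdown _ hp _ fun n => Bool.and_le_left _ _

theorem exists_coupling_of_tendsto {ρ : ℕ → Measure (BinSeq × BinSeq)}
    {ν : ℕ → Measure BinSeq} {νinf μ : Measure BinSeq} [IsProbabilityMeasure νinf]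
    (hρ : ∀ K, ρ K ∈ InvProb shift2) (hfst : ∀ K, Measure.map Prod.fst (ρ K) = ν K)
    (hM : ∀ K, Measure.map Mmul (ρ K) = μ)
    (hν : ∀ D ∈ measurableCylinders (fun _ : ℤ => Bool),
      Tendsto (fun K => (ν K).real D) atTop (𝓝 (νinf.real D))) :
    ∃ ρ' ∈ InvProb shift2, Measure.map Prod.fst ρ' = νinf ∧ Measure.map Mmul ρ' = μ := by
  let P : ℕ → ProbabilityMeasure (BinSeq × BinSeq) := fun K => ⟨ρ K, (hρ K).1⟩
  obtain ⟨P₀, φ, hφ, hlim⟩ := CompactSpace.tendsto_subseq P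
  have : IsProbabilityMeasure μ := by
    have := (hρ 0).1
    exact hM 0 ▸ Measure.isProbabilityMeasure_map continuous_Mmul.measurable.aemeasurable
  refine ⟨P₀, ⟨P₀.prop, ?_⟩, ?_, ?_⟩
  · exact ProbabilityMeasure.map_eq_of_tendsto continuous_shift2 hlim hlim fun j => (hρ _).2
  · refine Measure.ext_of_measurableCylinders fun D hD => ?_
    have hDm := MeasurableSet.of_mem_measurableCylinders hD
    have hclopen : IsClopen (Prod.fst ⁻¹' D : Set (BinSeq × BinSeq)) := by
      obtain ⟨s, S, -, rfl⟩ := (mem_measurableCylinders D).1 hD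
      exact (isClopen_cylinder s S).preimage continuous_fst
    refine tendsto_nhds_unique ?_ ((hν D hD).comp hφ.tendsto_atTop)
    simp only [map_measureReal_apply measurable_fst hDm, Function.comp_def, ← hfst]
    exact ProbabilityMeasure.tendsto_measureReal_of_isClopen hlim hclopen
  · exact ProbabilityMeasure.map_eq_of_tendsto (Q := fun _ => ⟨μ, inferInstance⟩)
      continuous_Mmul hlim tendsto_const_nhds fun j => hM _

theorem stmt5_general (x : ℕ → BinSeq) (xinf : BinSeq) (N : ℕ → ℕ)
    (ν : ℕ → Measure BinSeq) (νinf : Measure BinSeq)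
    (hmono : ∀ n : ℤ, Antitone (fun K => x K n))
    (hlim : ∀ n : ℤ, ∃ K0, ∀ K ≥ K0, x K n = xinf n)
    (hP : ∀ K, ν K ∈ InvProb shift) (hPinf : νinf ∈ InvProb shift)
    (hqg : ∀ K, QuasiGenericAlong shift (x K) N (ν K))
    (hqginf : QuasiGenericAlong shift xinf N νinf)
    (hdens : Filter.Tendsto (fun K => ((ν K) (cylB true)).toReal) Filter.atTop
      (nhds ((νinf (cylB true)).toReal)))
    (hsubK : ∀ K, Subord (closure (sandwichSet (fun _ => false) (x K))) (ν K)) :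
    Subord (⋂ K, closure (sandwichSet (fun _ => false) (x K))) νinf ∧
    Subord (closure (sandwichSet (fun _ => false) xinf)) νinf := by
  have := hPinf.1
  have hle : ∀ K n, xinf n ≤ x K n := fun K n => by
    obtain ⟨K0, hK0⟩ := hlim n
    exact (hK0 _ (le_max_right K K0)).symm.le.trans (hmono n (le_max_left K K0))
  set Y := closure (sandwichSet (fun _ => false) xinf)
  set C := {μ | ∃ ρ ∈ InvProb shift2, Measure.map Prod.fst ρ = νinf ∧ Measure.map Mmul ρ = μ}
  have hCY : C ⊆ MeasOn Y := by
    rintro _ ⟨ρ, hρ, hfst, rfl⟩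
    refine map_Mmul_mem_measOn hρ isClosed_closure.measurableSet
      (fun y hy u hu => mem_closure_sandwichSet_of_le hy hu) ?_
    rw [← Measure.map_apply measurable_fst isClosed_closure.measurableSet, hfst]
    exact hqginf.measure_eq_one isClosed_closure fun n =>
      subset_closure (shift_iterate_mem_sandwichSet xinf n)
  have hYZ : MeasOn Y ⊆ MeasOn (⋂ K, closure (sandwichSet (fun _ => false) (x K))) :=
    measOn_mono (Set.subset_iInter fun K => closure_mono (sandwichSet_mono (hle K)))
  have hZC : MeasOn (⋂ K, closure (sandwichSet (fun _ => false) (x K))) ⊆ C := by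
    intro μ hμ
    have hK : ∀ K, ∃ ρ ∈ InvProb shift2, Measure.map Prod.fst ρ = ν K ∧
        Measure.map Mmul ρ = μ := fun K =>
      (Set.ext_iff.mp (hsubK K) μ).mp (measOn_mono (Set.iInter_subset _ K) hμ)
    choose ρ hρ hfst hM using hK
    exact exists_coupling_of_tendsto hρ hfst hM fun D hD =>
      tendsto_measureReal_of_mem_measurableCylinders hle hP hPinf hqg hqginf hdens hD
  exact ⟨hZC.antisymm (hCY.trans hYZ), (hYZ.trans hZC).antisymm hCY⟩

/-- Let `(x_K)` be a good sequence with limit `x`, and suppose each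
`[𝟎, x_K]‾` is measure-theoretically subordinate with base measure `ν_K`. Then both
`⋂_K [𝟎, x_K]‾` and `[𝟎, x]‾` are measure-theoretically subordinate with base measure
`ν_∞ = lim ν_K`. -/
theorem stmt5 (x : ℕ → BinSeq) (xinf : BinSeq) (N : ℕ → ℕ)
    (ν : ℕ → Measure BinSeq) (νinf : Measure BinSeq)
    (hmono : ∀ n : ℤ, Antitone (fun K => x K n))
    (hlim : ∀ n : ℤ, ∃ K0, ∀ K ≥ K0, x K n = xinf n)
    (hN : StrictMono N)
    (hP : ∀ K, ν K ∈ InvProb shift) (hPinf : νinf ∈ InvProb shift)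
    (hqg : ∀ K, QuasiGenericAlong shift (x K) N (ν K))
    (hqginf : QuasiGenericAlong shift xinf N νinf)
    (hdens : Filter.Tendsto (fun K => ((ν K) (cylB true)).toReal) Filter.atTop
      (nhds ((νinf (cylB true)).toReal)))
    (hsubK : ∀ K, Subord (closure (sandwichSet (fun _ => false) (x K))) (ν K)) :
    Subord (⋂ K, closure (sandwichSet (fun _ => false) (x K))) νinf ∧
    Subord (closure (sandwichSet (fun _ => false) xinf)) νinf :=
  stmt5_general x xinf N ν νinf hmono hlim hP hPinf hqg hqginf hdens hsubK
end

section
/- Let X ⊆ {0,1}^ℤ be a measure-theoretically subordinate subshift with base measure ν. Then X is a sandwich measure-theoretically subordinate subshift for which δ_𝟎 ⊗ ν is a base measure, where δ_𝟎 is the point mass at the all-zeros sequence. -/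
open MeasureTheory Filter Topology

/-!
Since `N((0, x), y) = M(x, y)`, pushing a joining `ρ` of `ν` forward by `(x, y) ↦ ((0, x), y)`
gives a joining with pre-base marginal `δ_𝟎 ⊗ ν` and the same image. Conversely, a joining `κ`
whose `(w, x)`-marginal is `δ_𝟎 ⊗ ν` has `w = 𝟎` almost surely, so `N((w, x), y) = M(x, y)`
`κ`-a.e., and forgetting `w` gives a joining of `ν` with the same image.
-/

theorem map_mem_invProb {α β : Type*} [MeasurableSpace α] [MeasurableSpace β]
    {T : α → α} {S : β → β} {f : α → β} {μ : Measure α}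
    (hμ : μ ∈ InvProb T) (hT : Measurable T) (hS : Measurable S) (hf : Measurable f)
    (hconj : S ∘ f = f ∘ T) : μ.map f ∈ InvProb S := by
  have := hμ.1
  refine ⟨Measure.isProbabilityMeasure_map hf.aemeasurable, ?_⟩
  rw [Measure.map_map hS hf, hconj, ← Measure.map_map hf hT, hμ.2]

theorem ae_fst_eq_of_dirac_prod {α β : Type*} [MeasurableSpace α] [MeasurableSpace β]
    [MeasurableSingletonClass α] (a : α) (ν : Measure β) [SFinite ν] :
    ∀ᵐ p ∂(Measure.dirac a).prod ν, p.1 = a := by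
  rw [Measure.dirac_prod]
  exact (ae_map_iff measurable_prodMk_left.aemeasurable
    (measurable_fst (measurableSet_singleton a))).2 (Eventually.of_forall fun _ => rfl)

theorem dirac_prod_apply_eq_one {α β : Type*} [MeasurableSpace α] [MeasurableSpace β]
    {a : α} (ν : Measure β) [IsProbabilityMeasure ν] {s : Set (α × β)}
    (hs : ∀ b, (a, b) ∈ s) : (Measure.dirac a).prod ν s = 1 := by
  refine le_antisymm prob_le_one ?_
  have hfiber : Prod.mk a ⁻¹' s = Set.univ := Set.eq_univ_of_forall hs
  calc 1 = ν (Prod.mk a ⁻¹' s) := by rw [hfiber, measure_univ]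
    _ ≤ (Measure.dirac a).prod ν s := by
      rw [Measure.dirac_prod]; exact Measure.le_map_apply measurable_prodMk_left.aemeasurable s

lemma measurable_shift : Measurable shift := by unfold shift; fun_prop

lemma measurable_shift2 : Measurable shift2 := measurable_shift.prodMap measurable_shift

lemma measurable_shift3 : Measurable shift3 := measurable_shift2.prodMap measurable_shift

lemma measurable_Mmul : Measurable Mmul := by unfold Mmul; fun_prop

lemma measurable_Nmap : Measurable Nmap := by unfold Nmap; fun_prop

def zeroSeq : BinSeq := fun _ => false

lemma Nmap_zeroSeq (x y : BinSeq) : Nmap ((zeroSeq, x), y) = Mmul (x, y) := by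
  funext n
  simp only [Nmap, Mmul, zeroSeq]
  cases x n <;> cases y n <;> rfl

def insertZero (p : BinSeq × BinSeq) : (BinSeq × BinSeq) × BinSeq := ((zeroSeq, p.1), p.2)

def forgetLower (t : (BinSeq × BinSeq) × BinSeq) : BinSeq × BinSeq := (t.1.2, t.2)

lemma measurable_insertZero : Measurable insertZero := by unfold insertZero; fun_prop

lemma measurable_forgetLower : Measurable forgetLower := by unfold forgetLower; fun_prop

theorem sandwich_of_subord {ρ : Measure (BinSeq × BinSeq)} (hρ : ρ ∈ InvProb shift2) :
    ∃ κ ∈ InvProb shift3, κ.map Prod.fst = (Measure.dirac zeroSeq).prod (ρ.map Prod.fst) ∧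
      κ.map Nmap = ρ.map Mmul := by
  have := hρ.1
  refine ⟨ρ.map insertZero,
    map_mem_invProb hρ measurable_shift2 measurable_shift3 measurable_insertZero rfl, ?_, ?_⟩
  · rw [Measure.map_map measurable_fst measurable_insertZero, Measure.dirac_prod,
      Measure.map_map measurable_prodMk_left measurable_fst]
    rfl
  · rw [Measure.map_map measurable_Nmap measurable_insertZero]
    exact congrArg (ρ.map ·) (funext fun p => Nmap_zeroSeq p.1 p.2)

theorem subord_of_sandwich {ν : Measure BinSeq} [IsProbabilityMeasure ν]
    {κ : Measure ((BinSeq × BinSeq) × BinSeq)} (hκ : κ ∈ InvProb shift3)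
    (hfst : κ.map Prod.fst = (Measure.dirac zeroSeq).prod ν) :
    ∃ ρ ∈ InvProb shift2, ρ.map Prod.fst = ν ∧ ρ.map Mmul = κ.map Nmap := by
  have hzero : ∀ᵐ t ∂κ, t.1.1 = zeroSeq :=
    ae_of_ae_map measurable_fst.aemeasurable (hfst ▸ ae_fst_eq_of_dirac_prod zeroSeq ν)
  refine ⟨κ.map forgetLower,
    map_mem_invProb hκ measurable_shift3 measurable_shift2 measurable_forgetLower rfl, ?_, ?_⟩
  · rw [Measure.map_map measurable_fst measurable_forgetLower]
    change Measure.map (Prod.snd ∘ Prod.fst) κ = ν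
    rw [← Measure.map_map measurable_snd measurable_fst, hfst, Measure.map_snd_prod,
      measure_univ, one_smul]
  · rw [Measure.map_map measurable_Mmul measurable_forgetLower]
    refine Measure.map_congr ?_
    filter_upwards [hzero] with ⟨⟨w, x⟩, y⟩ (hw : w = zeroSeq)
    subst hw
    exact (Nmap_zeroSeq x y).symm

theorem stmt6_general (X : Set BinSeq) (ν : Measure BinSeq)
    (hν : ν ∈ InvProb shift) (hsub : Subord X ν) :
    SandwichSubord X ((Measure.dirac ((fun _ => false) : BinSeq)).prod ν) ∧
    AboveDiag ((Measure.dirac ((fun _ => false) : BinSeq)).prod ν) := by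
  have := hν.1
  refine ⟨?_, dirac_prod_apply_eq_one ν fun _ _ => Bool.false_le _⟩
  rw [SandwichSubord, hsub]
  ext μ
  constructor
  · rintro ⟨ρ, hρ, rfl, rfl⟩
    exact sandwich_of_subord hρ
  · rintro ⟨κ, hκ, hfst, rfl⟩
    exact subord_of_sandwich hκ hfst

/-- A measure-theoretically subordinate subshift `X` with base measure `ν` is
a sandwich measure-theoretically subordinate subshift with base measure `δ_𝟎 ⊗ ν`. -/
theorem stmt6 (X : Set BinSeq) (ν : Measure BinSeq)
    (hX : IsSubshift X) (hν : ν ∈ InvProb shift) (hsub : Subord X ν) :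
    SandwichSubord X ((Measure.dirac ((fun _ => false) : BinSeq)).prod ν) ∧
    AboveDiag ((Measure.dirac ((fun _ => false) : BinSeq)).prod ν) :=
  stmt6_general X ν hν hsub
end
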